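/- Let R be a ring such that (L·)-annihilator duality holds on R^n: (I^⊥)^⊥ = I for all right submodules I ≤ (R^n)_R and (X^⊥)^⊥ = X for all left submodules X ≤ _R(R^n), identifying (R^n)* ≅ R^n. Then every right R-module F with n generators also has this double-orthogonal property: (Y^⊥)^⊥ = Y for all submodules Y ≤ F and all submodules Y ≤ F*. -/
import Mathlib


universe u

section Perps

variable {R : Type u} [Ring R]

/-- Orthogonal of a submodule `X` of a right `R`-module `M` (as `Rᵐᵒᵖ`-module) inside
the dual `M* = Hom_R(M,R)`, which is a left `R`-module. -/
def modPerp {M : Type u} [AddCommGroup M] [Module Rᵐᵒᵖ M] (X : Submodule Rᵐᵒᵖ M) :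
    Submodule R (M →ₗ[Rᵐᵒᵖ] R) where
  carrier := {f | ∀ x ∈ X, f x = 0}
  add_mem' := by intro f g hf hg x hx; simp [hf x hx, hg x hx]
  zero_mem' := by intro x hx; simp
  smul_mem' := by intro c f hf x hx; simp [hf x hx]

/-- Orthogonal in `M` of a submodule `Y` of the dual `M*`. -/
def dualPerp {M : Type u} [AddCommGroup M] [Module Rᵐᵒᵖ M]
    (Y : Submodule R (M →ₗ[Rᵐᵒᵖ] R)) : Submodule Rᵐᵒᵖ M where
  carrier := {m | ∀ f ∈ Y, f m = 0}
  add_mem' := by intro m m' hm hm' f hf; simp [hm f hf, hm' f hf]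
  zero_mem' := by intro f hf; simp
  smul_mem' := by intro c m hm f hf; simp [hm f hf]

/-- `I^⊥` for a right submodule `I ≤ (Rⁿ)_R`, identifying `(Rⁿ)* ≅ Rⁿ` via
`x ↦ φ_x`, `φ_x(r) = Σ xᵢ rᵢ`: a left submodule of `Rⁿ`. -/
def rPerp {n : ℕ} (I : Submodule Rᵐᵒᵖ (Fin n → R)) : Submodule R (Fin n → R) where
  carrier := {x | ∀ r ∈ I, ∑ i, x i * r i = 0}
  add_mem' := by
    intro a b ha hb r hr
    simp only [Set.mem_setOf_eq, Pi.add_apply, add_mul, Finset.sum_add_distrib,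
      ha r hr, hb r hr, add_zero]
  zero_mem' := by intro r hr; simp
  smul_mem' := by
    intro c x hx r hr
    simp only [Pi.smul_apply, smul_eq_mul, mul_assoc, ← Finset.mul_sum]
    rw [hx r hr, mul_zero]

/-- `X^⊥` for a left submodule `X ≤ _R(Rⁿ)`: a right submodule of `Rⁿ`. -/
def lPerp {n : ℕ} (X : Submodule R (Fin n → R)) : Submodule Rᵐᵒᵖ (Fin n → R) where
  carrier := {r | ∀ x ∈ X, ∑ i, x i * r i = 0}
  add_mem' := by
    intro a b ha hb x hx
    simp only [Set.mem_setOf_eq, Pi.add_apply, mul_add, Finset.sum_add_distrib,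
      ha x hx, hb x hx, add_zero]
  zero_mem' := by intro x hx; simp
  smul_mem' := by
    intro c r hr x hx
    simp only [Pi.smul_apply, MulOpposite.smul_eq_mul_unop, ← mul_assoc, ← Finset.sum_mul]
    rw [hr x hx, zero_mul]

end Perps

section Aux

variable {R : Type u} [Ring R] {n : ℕ} {F : Type u} [AddCommGroup F] [Module Rᵐᵒᵖ F]

/-- The map `Rⁿ → F`, `r ↦ Σ s i • r i` (right-module version). -/
def piMap (s : Fin n → F) : (Fin n → R) →ₗ[Rᵐᵒᵖ] F where
  toFun r := ∑ i, MulOpposite.op (r i) • s i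
  map_add' a b := by
    simp [add_smul, Finset.sum_add_distrib]
  map_smul' c r := by
    simp only [Pi.smul_apply, MulOpposite.smul_eq_mul_unop, RingHom.id_apply, Finset.smul_sum]
    refine Finset.sum_congr rfl fun i _ => ?_
    rw [show MulOpposite.op (r i * MulOpposite.unop c) = c * MulOpposite.op (r i) by
      simp, mul_smul]

lemma apply_piMap (s : Fin n → F) (f : F →ₗ[Rᵐᵒᵖ] R) (r : Fin n → R) :
    f (piMap s r) = ∑ i, f (s i) * r i := by
  simp only [piMap, LinearMap.coe_mk, AddHom.coe_mk, map_sum, map_smul,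
    MulOpposite.smul_eq_mul_unop, MulOpposite.unop_op]

lemma piMap_single (s : Fin n → F) (i : Fin n) : piMap (R := R) s (Pi.single i 1) = s i := by
  simp [piMap, Pi.single_apply, apply_ite]

lemma piMap_surj (s : Fin n → F) (hs : Submodule.span Rᵐᵒᵖ (Set.range s) = ⊤) :
    Function.Surjective (piMap (R := R) s) := by
  intro m
  have hm : m ∈ Submodule.span Rᵐᵒᵖ (Set.range s) := hs ▸ Submodule.mem_top
  rw [Submodule.mem_span_range_iff_exists_fun] at hm
  obtain ⟨c, hc⟩ := hm
  exact ⟨fun i => MulOpposite.unop (c i), by simpa [piMap] using hc⟩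

end Aux

section Aux2

variable {R : Type u} [Ring R] {n : ℕ} {F : Type u} [AddCommGroup F] [Module Rᵐᵒᵖ F]

lemma exists_lift (s : Fin n → F) (hs : Submodule.span Rᵐᵒᵖ (Set.range s) = ⊤)
    (x : Fin n → R) (hx : ∀ r : Fin n → R, piMap s r = 0 → ∑ i, x i * r i = 0) :
    ∃ f : F →ₗ[Rᵐᵒᵖ] R, ∀ i, f (s i) = x i := by
  choose sec hsec using piMap_surj s hs
  have key : ∀ r : Fin n → R, ∑ i, x i * (sec (piMap s r)) i = ∑ i, x i * r i := by
    intro r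
    have h0 : piMap (R := R) s (sec (piMap s r) - r) = 0 := by
      rw [map_sub, hsec, sub_self]
    have h1 := hx _ h0
    simp only [Pi.sub_apply, mul_sub, Finset.sum_sub_distrib] at h1
    exact sub_eq_zero.mp h1
  refine ⟨{ toFun := fun m => ∑ i, x i * sec m i,
            map_add' := ?_, map_smul' := ?_ }, ?_⟩
  · intro a b
    have h2 : piMap (R := R) s (sec a + sec b) = a + b := by rw [map_add, hsec, hsec]
    calc ∑ i, x i * sec (a + b) i = ∑ i, x i * sec (piMap s (sec a + sec b)) i := by rw [h2]
      _ = ∑ i, x i * (sec a + sec b) i := key _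
      _ = ∑ i, x i * sec a i + ∑ i, x i * sec b i := by
          simp [mul_add, Finset.sum_add_distrib]
  · intro c m
    have h2 : piMap (R := R) s (c • sec m) = c • m := by rw [map_smul, hsec]
    calc ∑ i, x i * sec (c • m) i = ∑ i, x i * sec (piMap s (c • sec m)) i := by rw [h2]
      _ = ∑ i, x i * (c • sec m) i := key _
      _ = (∑ i, x i * sec m i) * MulOpposite.unop c := by
          simp [MulOpposite.smul_eq_mul_unop, Finset.sum_mul, mul_assoc]
      _ = (RingHom.id Rᵐᵒᵖ) c • ∑ i, x i * sec m i := rfl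
  · intro i
    have h2 : s i = piMap (R := R) s (Pi.single i 1) := (piMap_single s i).symm
    calc ∑ j, x j * sec (s i) j
        = ∑ j, x j * sec (piMap s (Pi.single i 1)) j := by rw [← h2]
      _ = ∑ j, x j * (Pi.single i 1 : Fin n → R) j := key _
      _ = x i := by simp [Pi.single_apply, mul_ite]

end Aux2

/-- If the double-orthogonal property holds on `Rⁿ` (for right and left submodules,
identifying `(Rⁿ)* ≅ Rⁿ`), then every `n`-generated right `R`-module `F` has the
double-orthogonal property: `(Y^⊥)^⊥ = Y` for all submodules `Y ≤ F` and all
submodules `Y ≤ F*`. -/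
theorem stmt17 {R : Type u} [Ring R] {n : ℕ}
    (hr : ∀ I : Submodule Rᵐᵒᵖ (Fin n → R), lPerp (rPerp I) = I)
    (hl : ∀ X : Submodule R (Fin n → R), rPerp (lPerp X) = X)
    (F : Type u) [AddCommGroup F] [Module Rᵐᵒᵖ F]
    (s : Fin n → F) (hs : Submodule.span Rᵐᵒᵖ (Set.range s) = ⊤) :
    (∀ Y : Submodule Rᵐᵒᵖ F, dualPerp (modPerp Y) = Y) ∧
    (∀ Y : Submodule R (F →ₗ[Rᵐᵒᵖ] R), modPerp (dualPerp Y) = Y) := by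
  have hsurj := piMap_surj s hs
  constructor
  · intro Y
    ext m
    constructor
    · intro hm
      have hm' : ∀ f ∈ modPerp Y, f m = 0 := hm
      obtain ⟨r, rfl⟩ := hsurj m
      set I : Submodule Rᵐᵒᵖ (Fin n → R) := Y.comap (piMap s) with hI
      have hrI : r ∈ I := by
        rw [← hr I]
        intro x hx
        have hx' : ∀ r' ∈ I, ∑ i, x i * r' i = 0 := hx
        have hker : ∀ r' : Fin n → R, piMap s r' = 0 → ∑ i, x i * r' i = 0 := by
          intro r' h
          exact hx' r' (by simp [hI, Submodule.mem_comap, h])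
        obtain ⟨f, hf⟩ := exists_lift s hs x hker
        have hfY : f ∈ modPerp Y := by
          intro a ha
          obtain ⟨r', rfl⟩ := hsurj a
          rw [apply_piMap]
          simp only [hf]
          exact hx' r' (Submodule.mem_comap.mpr ha)
        have h0 := hm' f hfY
        rw [apply_piMap] at h0
        simpa only [hf] using h0
      exact hrI
    · intro hm f hf
      exact hf m hm
  · intro Y
    set Φ : (F →ₗ[Rᵐᵒᵖ] R) →ₗ[R] (Fin n → R) :=
      { toFun := fun f => fun i => f (s i)
        map_add' := fun f g => rfl
        map_smul' := fun c f => rfl } with hΦ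
    set X : Submodule R (Fin n → R) := Y.map Φ with hX
    ext g
    constructor
    · intro hg
      have hg' : ∀ m ∈ dualPerp Y, g m = 0 := hg
      have hgX : Φ g ∈ rPerp (lPerp X) := by
        intro r hrX
        have hrX' : ∀ x ∈ X, ∑ i, x i * r i = 0 := hrX
        have hmem : piMap s r ∈ dualPerp Y := by
          intro f hf
          rw [apply_piMap]
          exact hrX' (Φ f) ⟨f, hf, rfl⟩
        have h0 := hg' _ hmem
        rwa [apply_piMap] at h0
      rw [hl X] at hgX
      obtain ⟨f, hfY, hfg⟩ := hgX
      have : f = g := by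
        apply LinearMap.ext
        intro m
        obtain ⟨r, rfl⟩ := hsurj m
        rw [apply_piMap, apply_piMap]
        refine Finset.sum_congr rfl fun i _ => ?_
        rw [show f (s i) = g (s i) from congrFun hfg i]
      exact this ▸ hfY
    · intro hg m hm
      exact hm g hg
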